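/- Let Γ=(G,σ) be a weighted signed graph. Then λ₁(L^σ)/2 ≤ h₁^σ(μ₁) ≤ √(2 · d_max · λ₁(L^σ)), where d_max = max_{u∈V} d(u) and μ₁ is the counting measure μ₁(u) = 1 for all u. -/

import Mathlib

open Finset Real

open scoped Classical

noncomputable section

namespace SignedGraph

variable {N : ℕ}

/-- The degree `d(u) = Σ_v w(u,v)` of a vertex. -/
def deg (w : Fin N → Fin N → ℝ) (u : Fin N) : ℝ := ∑ v, w u v

/-- Hypotheses making `(w, sgn)` a weighted signed graph: `w` is a symmetric nonnegative
weight function vanishing on the diagonal and `sgn` is a symmetric `±1`-valued signature. -/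
structure IsWSG {N : ℕ} (w : Fin N → Fin N → ℝ) (sgn : Fin N → Fin N → ℝ) : Prop where
  w_symm : ∀ u v, w u v = w v u
  w_nonneg : ∀ u v, 0 ≤ w u v
  w_loopless : ∀ u, w u u = 0
  sgn_symm : ∀ u v, sgn u v = sgn v u
  sgn_pm : ∀ u v, sgn u v = 1 ∨ sgn u v = -1

/-- The signature obtained from `sgn` by switching with the function `θ : V → {±1}`. -/
def switchSgn (sgn : Fin N → Fin N → ℝ) (θ : Fin N → ℝ) : Fin N → Fin N → ℝ :=
  fun u v => θ u * sgn u v * θ v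

/-- The signed adjacency matrix `A^σ`, `A^σ_{uv} = σ(u,v) w(u,v)`. -/
def adj (w sgn : Fin N → Fin N → ℝ) : Matrix (Fin N) (Fin N) ℝ :=
  Matrix.of fun u v => sgn u v * w u v

/-- The symmetric form `I - D^{-1/2} A^σ D^{-1/2}` of the signed normalized Laplacian,
whose eigenvalues are those of `Δ^σ = I - D^{-1} A^σ`. -/
def nlapSym (w sgn : Fin N → Fin N → ℝ) : Matrix (Fin N) (Fin N) ℝ :=
  Matrix.of fun u v =>
    (if u = v then (1 : ℝ) else 0) -
      sgn u v * w u v / (Real.sqrt (deg w u) * Real.sqrt (deg w v))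

/-- The signed (Kirchhoff) Laplacian `L^σ = D - A^σ`. -/
def lap (w sgn : Fin N → Fin N → ℝ) : Matrix (Fin N) (Fin N) ℝ :=
  Matrix.diagonal (deg w) - adj w sgn

/-- The nondecreasing enumeration of the eigenvalues (with multiplicity) of a real
symmetric matrix; junk value `0` if the matrix is not symmetric.  `evals M ⟨k-1,_⟩`
is the `k`-th smallest eigenvalue `λ_k(M)`. -/
def evals (M : Matrix (Fin N) (Fin N) ℝ) : Fin N → ℝ :=
  if h : M.IsHermitian then (fun i => h.eigenvalues (Tuple.sort h.eigenvalues i)) else 0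

/-- `|E(S,T)| = Σ_{u∈S, v∈T} w(u,v)`. -/
def EE (w : Fin N → Fin N → ℝ) (S T : Finset (Fin N)) : ℝ := ∑ u ∈ S, ∑ v ∈ T, w u v

/-- `|E⁺(S,T)|`: total weight of positive edges from `S` to `T`. -/
def Epos (w sgn : Fin N → Fin N → ℝ) (S T : Finset (Fin N)) : ℝ :=
  ∑ u ∈ S, ∑ v ∈ T, if sgn u v = 1 then w u v else 0

/-- `|E⁻(S,T)|`: total weight of negative edges from `S` to `T`. -/
def Eneg (w sgn : Fin N → Fin N → ℝ) (S T : Finset (Fin N)) : ℝ :=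
  ∑ u ∈ S, ∑ v ∈ T, if sgn u v = -1 then w u v else 0

/-- `vol_μ(S) = Σ_{u∈S} μ(u)`. -/
def vol (μ : Fin N → ℝ) (S : Finset (Fin N)) : ℝ := ∑ u ∈ S, μ u

/-- The signed bipartiteness ratio `β^σ(V₁,V₂)`. -/
def betaR (w sgn : Fin N → Fin N → ℝ) (μ : Fin N → ℝ) (V1 V2 : Finset (Fin N)) : ℝ :=
  (2 * Epos w sgn V1 V2 + Eneg w sgn V1 V1 + Eneg w sgn V2 V2 +
      EE w (V1 ∪ V2) (V1 ∪ V2)ᶜ) / vol μ (V1 ∪ V2)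

/-- The signed Cheeger constant `h₁^σ(μ)`: the minimum of `β^σ(V₁,V₂)` over all pairs of
disjoint subsets with nonempty union. -/
def h1 (w sgn : Fin N → Fin N → ℝ) (μ : Fin N → ℝ) : ℝ :=
  sInf {x | ∃ V1 V2 : Finset (Fin N),
    Disjoint V1 V2 ∧ (V1 ∪ V2).Nonempty ∧ x = betaR w sgn μ V1 V2}

/-!
Lower bound: for disjoint `V₁, V₂` the vector `x = 1_{V₁} - 1_{V₂}` has `‖x‖² = |V₁ ∪ V₂|`, and
since `|x_u - σ(u,v) x_v| ≤ 2` the form `xᵀ L^σ x = ½ Σ w (x_u - σ x_v)²` is at most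
`Σ w |x_u - σ x_v|`, which is twice the numerator of `β^σ(V₁,V₂)`.

Upper bound: take a unit eigenvector `f` of `λ₁` and, for `t ∈ (0, max f²]`, the threshold sets
`V₁(t) = {f > 0, f² ≥ t}`, `V₂(t) = {f < 0, f² ≥ t}`. Integrated over `t`, the numerators of
`β^σ(V₁(t),V₂(t))` add up to at most `½ Σ w |f_u - σ f_v| (|f_u| + |f_v|)` and the volumes to
`‖f‖² = 1`, so for some `t` the ratio is at most that sum, which by Cauchy–Schwarz is at most
`½ √(2λ₁) √(4 d_max)`.
-/

open Matrix MeasureTheory Set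

lemma _root_.Matrix.IsHermitian.mul_dotProduct_self_le {n : Type*} [Fintype n] [DecidableEq n]
    {M : Matrix n n ℝ} (hM : M.IsHermitian) {c : ℝ} (hc : ∀ i, c ≤ hM.eigenvalues i)
    (x : n → ℝ) : c * (x ⬝ᵥ x) ≤ x ⬝ᵥ (M *ᵥ x) := by
  have hpsd : (M - algebraMap ℝ _ c).PosSemidef := by
    refine posSemidef_iff_isHermitian_and_spectrum_nonneg.mpr
      ⟨hM.sub (by simp [algebraMap_eq_diagonal]), ?_⟩
    rw [← spectrum.sub_singleton_eq, hM.spectrum_real_eq_range_eigenvalues]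
    rintro _ ⟨_, ⟨i, rfl⟩, _, rfl, rfl⟩
    exact sub_nonneg.mpr (hc i)
  simpa [sub_mulVec, Algebra.algebraMap_eq_smul_one, smul_mulVec, mul_comm]
    using hpsd.dotProduct_mulVec_nonneg x

variable {M : Matrix (Fin N) (Fin N) ℝ}

lemma evals_zero_le_eigenvalues (hM : M.IsHermitian) (hN : 0 < N) (i : Fin N) :
    evals M ⟨0, hN⟩ ≤ hM.eigenvalues i := by
  rw [evals, dif_pos hM]
  simpa using Tuple.monotone_sort hM.eigenvalues
    (show (⟨0, hN⟩ : Fin N) ≤ (Tuple.sort hM.eigenvalues).symm i from Nat.zero_le _)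

lemma evals_zero_mul_dotProduct_self_le (hM : M.IsHermitian) (hN : 0 < N) (x : Fin N → ℝ) :
    evals M ⟨0, hN⟩ * (x ⬝ᵥ x) ≤ x ⬝ᵥ (M *ᵥ x) :=
  hM.mul_dotProduct_self_le (evals_zero_le_eigenvalues hM hN) x

lemma exists_dotProduct_self_eq_one_and_dotProduct_mulVec_eq_evals_zero (hM : M.IsHermitian)
    (hN : 0 < N) : ∃ f : Fin N → ℝ, f ⬝ᵥ f = 1 ∧ f ⬝ᵥ (M *ᵥ f) = evals M ⟨0, hN⟩ := by
  set i := Tuple.sort hM.eigenvalues ⟨0, hN⟩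
  refine ⟨hM.eigenvectorBasis i, ?_, ?_⟩
  · have h : inner ℝ (hM.eigenvectorBasis i) (hM.eigenvectorBasis i) = 1 := by simp
    rw [EuclideanSpace.inner_eq_star_dotProduct] at h
    simpa using h
  · rw [evals, dif_pos hM, hM.eigenvalues_eq i]
    simp

variable {w sgn : Fin N → Fin N → ℝ}

lemma IsWSG.sgn_mul_self (hG : IsWSG w sgn) (u v : Fin N) : sgn u v * sgn u v = 1 := by
  rcases hG.sgn_pm u v with h | h <;> simp [h]

lemma IsWSG.abs_sgn_mul (hG : IsWSG w sgn) (u v : Fin N) (y : ℝ) : |sgn u v * y| = |y| := by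
  rcases hG.sgn_pm u v with h | h <;> simp [h]

lemma IsWSG.sum_sum_swap (hG : IsWSG w sgn) (F : Fin N → Fin N → ℝ) :
    ∑ u, ∑ v, w u v * F v u = ∑ u, ∑ v, w u v * F u v := by
  rw [Finset.sum_comm]
  simp_rw [hG.w_symm]

lemma IsWSG.Epos_comm (hG : IsWSG w sgn) (S T : Finset (Fin N)) :
    Epos w sgn S T = Epos w sgn T S := by
  rw [Epos, Epos, Finset.sum_comm]
  simp_rw [hG.w_symm, hG.sgn_symm]

lemma IsWSG.EE_comm (hG : IsWSG w sgn) (S T : Finset (Fin N)) : EE w S T = EE w T S := by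
  rw [EE, EE, Finset.sum_comm]
  simp_rw [hG.w_symm]

lemma IsWSG.lap_isHermitian (hG : IsWSG w sgn) : (lap w sgn).IsHermitian := by
  ext u v
  by_cases h : u = v
  · simp [h]
  · simp [lap, adj, h, Ne.symm h, hG.w_symm u v, hG.sgn_symm u v]

lemma IsWSG.dotProduct_lap_mulVec (hG : IsWSG w sgn) (x : Fin N → ℝ) :
    x ⬝ᵥ (lap w sgn *ᵥ x) = (∑ u, ∑ v, w u v * (x u - sgn u v * x v) ^ 2) / 2 := by
  have hexpand : ∀ u v, w u v * (x u - sgn u v * x v) ^ 2 =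
      w u v * x u ^ 2 + w u v * x v ^ 2 - 2 * (x u * (sgn u v * w u v * x v)) := fun u v => by
    linear_combination w u v * x v ^ 2 * hG.sgn_mul_self u v
  have hquad : x ⬝ᵥ (lap w sgn *ᵥ x) =
      ∑ u, ∑ v, w u v * x u ^ 2 - ∑ u, ∑ v, x u * (sgn u v * w u v * x v) := by
    rw [lap, sub_mulVec, dotProduct_sub]
    simp only [dotProduct, mulVec_diagonal]
    simp only [deg, adj, mulVec, dotProduct, of_apply, Finset.sum_mul, Finset.mul_sum]
    congr 1
    exact Finset.sum_congr rfl fun _ _ => Finset.sum_congr rfl fun _ _ => by ring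
  rw [hquad]
  simp only [hexpand, Finset.sum_add_distrib, Finset.sum_sub_distrib,
    hG.sum_sum_swap fun u _ => x u ^ 2, ← Finset.mul_sum]
  ring

def signedIndicator (V1 V2 : Finset (Fin N)) (u : Fin N) : ℝ :=
  (if u ∈ V1 then 1 else 0) - (if u ∈ V2 then 1 else 0)

def signedVariation (w sgn : Fin N → Fin N → ℝ) (x : Fin N → ℝ) : ℝ :=
  ∑ u, ∑ v, w u v * |x u - sgn u v * x v|

lemma abs_signedIndicator_le_one (V1 V2 : Finset (Fin N)) (u : Fin N) :
    |signedIndicator V1 V2 u| ≤ 1 := by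
  unfold signedIndicator
  split_ifs <;> norm_num

lemma dotProduct_signedIndicator_self {V1 V2 : Finset (Fin N)} (hdisj : Disjoint V1 V2) :
    signedIndicator V1 V2 ⬝ᵥ signedIndicator V1 V2 = #(V1 ∪ V2) := by
  rw [Finset.card_union_of_disjoint hdisj]
  have hsq : ∀ u, signedIndicator V1 V2 u * signedIndicator V1 V2 u =
      (if u ∈ V1 then 1 else 0) + (if u ∈ V2 then 1 else 0) := fun u => by
    have : u ∈ V1 → u ∉ V2 := fun h => Finset.disjoint_left.mp hdisj h
    unfold signedIndicator
    split_ifs <;> simp_all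
  simp [dotProduct, hsq, Finset.sum_add_distrib]

lemma IsWSG.signedVariation_nonneg (hG : IsWSG w sgn) (x : Fin N → ℝ) :
    0 ≤ signedVariation w sgn x :=
  Finset.sum_nonneg fun u _ => Finset.sum_nonneg fun v _ =>
    mul_nonneg (hG.w_nonneg u v) (abs_nonneg _)

lemma sum_sum_ite_mem_and (A B : Finset (Fin N)) (F : Fin N → Fin N → ℝ) :
    ∑ u, ∑ v, (if u ∈ A ∧ v ∈ B then F u v else 0) = ∑ u ∈ A, ∑ v ∈ B, F u v := by
  simp [ite_and, Finset.sum_ite_mem]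

lemma IsWSG.betaR_numerator_eq (hG : IsWSG w sgn) {V1 V2 : Finset (Fin N)}
    (hdisj : Disjoint V1 V2) :
    2 * Epos w sgn V1 V2 + Eneg w sgn V1 V1 + Eneg w sgn V2 V2 + EE w (V1 ∪ V2) (V1 ∪ V2)ᶜ =
      signedVariation w sgn (signedIndicator V1 V2) / 2 := by
  set S := V1 ∪ V2
  set P : Fin N → Fin N → ℝ := fun u v => if sgn u v = 1 then w u v else 0
  set Q : Fin N → Fin N → ℝ := fun u v => if sgn u v = -1 then w u v else 0
  -- `2 |E⁺(V₁,V₂)|` and `|E(S,Sᶜ)|` are spread evenly over both orientations of each edge, so that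
  -- every ordered pair `(u, v)` meets at most one of the six terms
  have hpair : ∀ u v, w u v * |signedIndicator V1 V2 u - sgn u v * signedIndicator V1 V2 v| / 2 =
      (if u ∈ V1 ∧ v ∈ V2 then P u v else 0) + (if u ∈ V2 ∧ v ∈ V1 then P u v else 0) +
      (if u ∈ V1 ∧ v ∈ V1 then Q u v else 0) + (if u ∈ V2 ∧ v ∈ V2 then Q u v else 0) +
      (if u ∈ S ∧ v ∈ Sᶜ then w u v / 2 else 0) + (if u ∈ Sᶜ ∧ v ∈ S then w u v / 2 else 0) := by
    intro u v
    have hu : u ∈ V1 → u ∉ V2 := fun h => Finset.disjoint_left.mp hdisj h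
    have hv : v ∈ V1 → v ∉ V2 := fun h => Finset.disjoint_left.mp hdisj h
    rcases hG.sgn_pm u v with hs | hs <;> by_cases hu1 : u ∈ V1 <;> by_cases hu2 : u ∈ V2 <;>
      by_cases hv1 : v ∈ V1 <;> by_cases hv2 : v ∈ V2 <;>
      simp_all [signedIndicator, S, P, Q] <;> norm_num
  calc 2 * Epos w sgn V1 V2 + Eneg w sgn V1 V1 + Eneg w sgn V2 V2 + EE w S Sᶜ
      = Epos w sgn V1 V2 + Epos w sgn V2 V1 + Eneg w sgn V1 V1 + Eneg w sgn V2 V2 +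
          EE w S Sᶜ / 2 + EE w Sᶜ S / 2 := by
        rw [hG.Epos_comm V2, hG.EE_comm Sᶜ]; ring
    _ = signedVariation w sgn (signedIndicator V1 V2) / 2 := by
        simp only [signedVariation, Finset.sum_div, hpair, Finset.sum_add_distrib,
          sum_sum_ite_mem_and, Epos, Eneg, EE, P, Q]

lemma IsWSG.betaR_one_eq (hG : IsWSG w sgn) {V1 V2 : Finset (Fin N)} (hdisj : Disjoint V1 V2) :
    betaR w sgn (fun _ => 1) V1 V2 =
      signedVariation w sgn (signedIndicator V1 V2) / 2 / #(V1 ∪ V2) := by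
  rw [betaR, hG.betaR_numerator_eq hdisj]
  simp [vol]

lemma IsWSG.betaR_one_nonneg (hG : IsWSG w sgn) {V1 V2 : Finset (Fin N)}
    (hdisj : Disjoint V1 V2) : 0 ≤ betaR w sgn (fun _ => 1) V1 V2 := by
  rw [hG.betaR_one_eq hdisj]
  have := hG.signedVariation_nonneg (signedIndicator V1 V2)
  positivity

lemma sub_sq_le_two_mul_abs_sub {a b : ℝ} (ha : |a| ≤ 1) (hb : |b| ≤ 1) :
    (a - b) ^ 2 ≤ 2 * |a - b| := by
  rw [← sq_abs]
  have : |a - b| ≤ 2 := (abs_sub _ _).trans (by linarith)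
  nlinarith [abs_nonneg (a - b)]

lemma IsWSG.dotProduct_lap_mulVec_le_signedVariation (hG : IsWSG w sgn) {x : Fin N → ℝ}
    (hx : ∀ u, |x u| ≤ 1) : x ⬝ᵥ (lap w sgn *ᵥ x) ≤ signedVariation w sgn x := by
  rw [hG.dotProduct_lap_mulVec, signedVariation, div_le_iff₀ two_pos, Finset.sum_mul]
  refine Finset.sum_le_sum fun u _ => ?_
  rw [Finset.sum_mul]
  refine Finset.sum_le_sum fun v _ => ?_
  have := sub_sq_le_two_mul_abs_sub (hx u) ((hG.abs_sgn_mul u v (x v)).trans_le (hx v))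
  nlinarith [hG.w_nonneg u v]

lemma IsWSG.evals_lap_le_two_mul_betaR (hG : IsWSG w sgn) (hN : 0 < N)
    {V1 V2 : Finset (Fin N)} (hdisj : Disjoint V1 V2) (hne : (V1 ∪ V2).Nonempty) :
    evals (lap w sgn) ⟨0, hN⟩ ≤ 2 * betaR w sgn (fun _ => 1) V1 V2 := by
  set x := signedIndicator V1 V2
  have hcard : (0 : ℝ) < #(V1 ∪ V2) := by exact_mod_cast hne.card_pos
  have hrayleigh := evals_zero_mul_dotProduct_self_le hG.lap_isHermitian hN x
  rw [dotProduct_signedIndicator_self hdisj] at hrayleigh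
  have hcut := hrayleigh.trans
    (hG.dotProduct_lap_mulVec_le_signedVariation (abs_signedIndicator_le_one V1 V2))
  calc evals (lap w sgn) ⟨0, hN⟩ ≤ signedVariation w sgn x / #(V1 ∪ V2) := by
        rwa [le_div_iff₀ hcard]
    _ = 2 * betaR w sgn (fun _ => 1) V1 V2 := by rw [hG.betaR_one_eq hdisj]; ring

def thresholdSign (a t : ℝ) : ℝ := if t ≤ a ^ 2 then Real.sign a else 0

lemma IsWSG.sgn_mul_thresholdSign (hG : IsWSG w sgn) (u v : Fin N) (a t : ℝ) :
    sgn u v * thresholdSign a t = thresholdSign (sgn u v * a) t := by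
  rcases hG.sgn_pm u v with h | h <;> simp [h, thresholdSign, Real.sign_neg]

lemma sq_thresholdSign {a t : ℝ} (ht : 0 < t) :
    thresholdSign a t ^ 2 = (Iic (a ^ 2)).indicator 1 t := by
  rcases lt_trichotomy a 0 with h | rfl | h
  · simp [thresholdSign, indicator, Real.sign_of_neg h, apply_ite (· ^ 2)]
  · simp [thresholdSign, indicator, ht.not_ge]
  · simp [thresholdSign, indicator, Real.sign_of_pos h, apply_ite (· ^ 2)]

lemma abs_thresholdSign_sub {a b t : ℝ} (ht : 0 < t) :
    |thresholdSign a t - thresholdSign b t| =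
      (Iic (a ^ 2)).indicator 1 t + (Iic (b ^ 2)).indicator 1 t -
        2 * (if 0 < a * b then 1 else 0) * (Iic (min (a ^ 2) (b ^ 2))).indicator 1 t := by
  rcases lt_trichotomy a 0 with ha | ha | ha <;> rcases lt_trichotomy b 0 with hb | hb | hb <;>
    by_cases h1 : t ≤ a ^ 2 <;> by_cases h2 : t ≤ b ^ 2 <;>
    simp [thresholdSign, indicator, ha, hb, h1, h2, Real.sign_of_neg, Real.sign_of_pos,
      mul_pos_iff, ht.not_ge, ha.le, hb.le, ha.not_gt, hb.not_gt] <;> norm_num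

lemma integrableOn_indicator_Iic (r B : ℝ) :
    IntegrableOn ((Iic r).indicator (1 : ℝ → ℝ)) (Ioc 0 B) :=
  (integrableOn_const measure_Ioc_lt_top.ne).indicator measurableSet_Iic

lemma setIntegral_Ioc_indicator_Iic {r B : ℝ} (hr : 0 ≤ r) (hrB : r ≤ B) :
    ∫ t in Ioc 0 B, (Iic r).indicator (1 : ℝ → ℝ) t = r := by
  rw [setIntegral_indicator measurableSet_Iic, Ioc_inter_Iic, min_eq_right hrB]
  simp [hr]

lemma integrableOn_abs_thresholdSign_sub (a b B : ℝ) :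
    IntegrableOn (fun t => |thresholdSign a t - thresholdSign b t|) (Ioc 0 B) :=
  IntegrableOn.congr_fun
    (((integrableOn_indicator_Iic _ _).add (integrableOn_indicator_Iic _ _)).sub
      ((integrableOn_indicator_Iic _ _).const_mul _))
    (fun _ ht => (abs_thresholdSign_sub ht.1).symm) measurableSet_Ioc

lemma setIntegral_abs_thresholdSign_sub_le {a b B : ℝ} (ha : a ^ 2 ≤ B) (hb : b ^ 2 ≤ B) :
    ∫ t in Ioc 0 B, |thresholdSign a t - thresholdSign b t| ≤ |a - b| * (|a| + |b|) := by
  have hab : IntegrableOn (fun t => (Iic (a ^ 2)).indicator 1 t +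
      (Iic (b ^ 2)).indicator (1 : ℝ → ℝ) t) (Ioc 0 B) :=
    (integrableOn_indicator_Iic _ _).add (integrableOn_indicator_Iic _ _)
  rw [setIntegral_congr_fun measurableSet_Ioc fun t ht => abs_thresholdSign_sub ht.1,
    integral_sub hab ((integrableOn_indicator_Iic _ _).const_mul _),
    integral_add (integrableOn_indicator_Iic _ _) (integrableOn_indicator_Iic _ _),
    integral_const_mul, setIntegral_Ioc_indicator_Iic (sq_nonneg a) ha,
    setIntegral_Ioc_indicator_Iic (sq_nonneg b) hb,
    setIntegral_Ioc_indicator_Iic (le_min (sq_nonneg a) (sq_nonneg b)) ((min_le_left _ _).trans ha)]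
  have hsub := abs_sub a b
  split_ifs with hpos
  · calc a ^ 2 + b ^ 2 - 2 * 1 * min (a ^ 2) (b ^ 2) = |a - b| * |a + b| := by
          rw [← abs_mul, mul_comm (a - b), ← sq_sub_sq]
          rcases le_total (a ^ 2) (b ^ 2) with h | h
          · rw [min_eq_left h, abs_of_nonpos (sub_nonpos.mpr h)]; ring
          · rw [min_eq_right h, abs_of_nonneg (sub_nonneg.mpr h)]; ring
      _ ≤ |a - b| * (|a| + |b|) := mul_le_mul_of_nonneg_left (abs_add_le a b) (abs_nonneg _)
  · have : a ^ 2 + b ^ 2 ≤ |a - b| ^ 2 := by rw [sq_abs]; nlinarith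
    nlinarith [abs_nonneg (a - b)]

section Sweep

variable (f : Fin N → ℝ) (B : ℝ)

lemma IsWSG.integrableOn_signedVariation_thresholdSign (hG : IsWSG w sgn) :
    IntegrableOn (fun t => signedVariation w sgn fun u => thresholdSign (f u) t) (Ioc 0 B) := by
  simp only [signedVariation, hG.sgn_mul_thresholdSign]
  exact integrable_finsetSum _ fun u _ => integrable_finsetSum _ fun v _ =>
    (integrableOn_abs_thresholdSign_sub _ _ _).const_mul _

lemma IsWSG.setIntegral_signedVariation_thresholdSign_le (hG : IsWSG w sgn)
    (hB : ∀ u, f u ^ 2 ≤ B) :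
    ∫ t in Ioc 0 B, signedVariation w sgn (fun u => thresholdSign (f u) t) ≤
      ∑ u, ∑ v, w u v * (|f u - sgn u v * f v| * (|f u| + |f v|)) := by
  simp only [signedVariation, hG.sgn_mul_thresholdSign]
  rw [integral_finsetSum _ fun u _ => integrable_finsetSum _ fun v _ =>
    (integrableOn_abs_thresholdSign_sub _ _ _).const_mul _]
  refine Finset.sum_le_sum fun u _ => ?_
  rw [integral_finsetSum _ fun v _ => (integrableOn_abs_thresholdSign_sub _ _ _).const_mul _]
  refine Finset.sum_le_sum fun v _ => ?_
  rw [integral_const_mul, ← hG.abs_sgn_mul u v (f v)]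
  have hv : (sgn u v * f v) ^ 2 ≤ B := by rw [← sq_abs, hG.abs_sgn_mul, sq_abs]; exact hB v
  exact mul_le_mul_of_nonneg_left (setIntegral_abs_thresholdSign_sub_le (hB u) hv)
    (hG.w_nonneg u v)

lemma dotProduct_thresholdSign_self {t : ℝ} (ht : 0 < t) :
    ((fun u => thresholdSign (f u) t) ⬝ᵥ fun u => thresholdSign (f u) t) =
      ∑ u, (Iic (f u ^ 2)).indicator 1 t := by
  simp only [dotProduct, ← sq, sq_thresholdSign ht]

lemma integrableOn_dotProduct_thresholdSign :
    IntegrableOn (fun t => (fun u => thresholdSign (f u) t) ⬝ᵥ fun u => thresholdSign (f u) t)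
      (Ioc 0 B) :=
  IntegrableOn.congr_fun (integrable_finsetSum _ fun u _ => integrableOn_indicator_Iic (f u ^ 2) B)
    (fun _ ht => (dotProduct_thresholdSign_self f ht.1).symm) measurableSet_Ioc

lemma setIntegral_dotProduct_thresholdSign (hB : ∀ u, f u ^ 2 ≤ B) :
    ∫ t in Ioc 0 B, (fun u => thresholdSign (f u) t) ⬝ᵥ (fun u => thresholdSign (f u) t) =
      f ⬝ᵥ f := by
  rw [setIntegral_congr_fun measurableSet_Ioc fun _ ht => dotProduct_thresholdSign_self f ht.1,
    integral_finsetSum _ fun u _ => integrableOn_indicator_Iic (f u ^ 2) B]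
  simp only [dotProduct, ← sq]
  exact Finset.sum_congr rfl fun u _ => setIntegral_Ioc_indicator_Iic (sq_nonneg _) (hB u)

end Sweep

lemma exists_le_mul_of_setIntegral_le {F G : ℝ → ℝ} {B K : ℝ} (hB : 0 < B)
    (hF : IntegrableOn F (Ioc 0 B)) (hG : IntegrableOn G (Ioc 0 B))
    (h : ∫ t in Ioc 0 B, F t ≤ K * ∫ t in Ioc 0 B, G t) : ∃ t ∈ Ioc 0 B, F t ≤ K * G t := by
  have hvol : volume (Ioc 0 B) ≠ 0 := by simp [hB]
  obtain ⟨t, ht, hle⟩ :=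
    exists_le_setAverage hvol measure_Ioc_lt_top.ne (hF.sub (hG.const_mul K))
  refine ⟨t, ht, sub_nonpos.mp (hle.trans ?_)⟩
  simp only [setAverage_eq, Pi.sub_apply]
  rw [integral_sub hF (hG.const_mul K), integral_const_mul]
  exact smul_nonpos_of_nonneg_of_nonpos (by positivity) (sub_nonpos.mpr h)

lemma signedIndicator_levelSets (f : Fin N → ℝ) (t : ℝ) :
    signedIndicator {u | 0 < f u ∧ t ≤ f u ^ 2} {u | f u < 0 ∧ t ≤ f u ^ 2} =
      fun u => thresholdSign (f u) t := by
  ext u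
  rcases lt_trichotomy (f u) 0 with h | h | h
  · simp only [signedIndicator, thresholdSign, Real.sign_of_neg h, h, h.not_gt,
      Finset.mem_filter, Finset.mem_univ, true_and, false_and, if_false]
    split_ifs <;> simp
  · simp [signedIndicator, thresholdSign, h]
  · simp [signedIndicator, thresholdSign, h, h.not_gt, Real.sign_of_pos]

lemma disjoint_levelSets (f : Fin N → ℝ) (t : ℝ) :
    Disjoint ({u | 0 < f u ∧ t ≤ f u ^ 2} : Finset (Fin N))
      ({u | f u < 0 ∧ t ≤ f u ^ 2} : Finset (Fin N)) := by
  simp only [Finset.disjoint_filter]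
  exact fun u _ h1 h2 => h1.1.not_gt h2.1

lemma IsWSG.exists_two_mul_betaR_le (hG : IsWSG w sgn) {f : Fin N → ℝ} (hf : f ⬝ᵥ f = 1) :
    ∃ V1 V2 : Finset (Fin N), Disjoint V1 V2 ∧ (V1 ∪ V2).Nonempty ∧
      2 * betaR w sgn (fun _ => 1) V1 V2 ≤
        ∑ u, ∑ v, w u v * (|f u - sgn u v * f v| * (|f u| + |f v|)) := by
  set K := ∑ u, ∑ v, w u v * (|f u - sgn u v * f v| * (|f u| + |f v|))
  obtain ⟨u1, -, hu1⟩ := Finset.exists_ne_zero_of_sum_ne_zero (hf.trans_ne one_ne_zero)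
  obtain ⟨u0, -, hu0⟩ := Finset.exists_max_image Finset.univ (fun u => f u ^ 2) ⟨u1, mem_univ _⟩
  set B := f u0 ^ 2
  have hB : ∀ u, f u ^ 2 ≤ B := fun u => hu0 u (mem_univ u)
  have hBpos : 0 < B := by nlinarith [hB u1, (mul_self_nonneg (f u1)).lt_of_ne hu1.symm]
  obtain ⟨t, ht, hle⟩ := exists_le_mul_of_setIntegral_le (K := K) hBpos
    (hG.integrableOn_signedVariation_thresholdSign f B) (integrableOn_dotProduct_thresholdSign f B)
    (by rw [setIntegral_dotProduct_thresholdSign f B hB, hf, mul_one]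
        exact hG.setIntegral_signedVariation_thresholdSign_le f B hB)
  have hdisj := disjoint_levelSets f t
  rw [← signedIndicator_levelSets f t, dotProduct_signedIndicator_self hdisj] at hle
  set V1 : Finset (Fin N) := {u | 0 < f u ∧ t ≤ f u ^ 2}
  set V2 : Finset (Fin N) := {u | f u < 0 ∧ t ≤ f u ^ 2}
  have hne : (V1 ∪ V2).Nonempty := by
    refine ⟨u0, ?_⟩
    have hu0 : f u0 ≠ 0 := fun h => by simp [B, h] at hBpos
    have htB : t ≤ f u0 ^ 2 := ht.2
    rcases hu0.lt_or_gt with h | h <;> simp [V1, V2, h, htB]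
  refine ⟨V1, V2, hdisj, hne, ?_⟩
  rw [hG.betaR_one_eq hdisj, show ∀ a c : ℝ, 2 * (a / 2 / c) = a / c from fun a c => by ring,
    div_le_iff₀ (by exact_mod_cast hne.card_pos)]
  exact hle

lemma sq_sum_sum_mul_mul_le {w : Fin N → Fin N → ℝ} (hw : ∀ u v, 0 ≤ w u v)
    (A B : Fin N → Fin N → ℝ) :
    (∑ u, ∑ v, w u v * (A u v * B u v)) ^ 2 ≤
      (∑ u, ∑ v, w u v * A u v ^ 2) * ∑ u, ∑ v, w u v * B u v ^ 2 := by
  simp only [← Fintype.sum_prod_type']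
  exact Finset.sum_sq_le_sum_mul_sum_of_sq_le_mul _
    (fun _ _ => mul_nonneg (hw _ _) (sq_nonneg _)) (fun _ _ => mul_nonneg (hw _ _) (sq_nonneg _))
    (fun _ _ => le_of_eq (by ring))

lemma IsWSG.sum_sum_mul_abs_add_abs_sq_le (hG : IsWSG w sgn) {dmax : ℝ}
    (hd : ∀ u, deg w u ≤ dmax) (f : Fin N → ℝ) :
    ∑ u, ∑ v, w u v * (|f u| + |f v|) ^ 2 ≤ 4 * dmax * (f ⬝ᵥ f) := by
  calc ∑ u, ∑ v, w u v * (|f u| + |f v|) ^ 2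
      ≤ ∑ u, ∑ v, (2 * (w u v * f u ^ 2) + 2 * (w u v * f v ^ 2)) :=
        Finset.sum_le_sum fun u _ => Finset.sum_le_sum fun v _ => by
          nlinarith [hG.w_nonneg u v, sq_nonneg (|f u| - |f v|), sq_abs (f u), sq_abs (f v)]
    _ = 4 * ∑ u, deg w u * f u ^ 2 := by
        simp only [Finset.sum_add_distrib, ← Finset.mul_sum, hG.sum_sum_swap fun u _ => f u ^ 2]
        simp only [deg, Finset.sum_mul]
        ring
    _ ≤ 4 * ∑ u, dmax * f u ^ 2 := by gcongr with u; exact hd u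
    _ = 4 * dmax * (f ⬝ᵥ f) := by simp [dotProduct, sq, Finset.mul_sum, mul_assoc]

lemma IsWSG.sq_sum_sum_mul_abs_sub_mul_le (hG : IsWSG w sgn) {dmax : ℝ}
    (hd : ∀ u, deg w u ≤ dmax) (f : Fin N → ℝ) :
    (∑ u, ∑ v, w u v * (|f u - sgn u v * f v| * (|f u| + |f v|))) ^ 2 ≤
      8 * dmax * (f ⬝ᵥ f) * (f ⬝ᵥ (lap w sgn *ᵥ f)) := by
  refine (sq_sum_sum_mul_mul_le hG.w_nonneg _ _).trans ?_
  simp only [sq_abs]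
  rw [hG.dotProduct_lap_mulVec]
  have hvar : 0 ≤ ∑ u, ∑ v, w u v * (f u - sgn u v * f v) ^ 2 :=
    Finset.sum_nonneg fun u _ => Finset.sum_nonneg fun v _ =>
      mul_nonneg (hG.w_nonneg u v) (sq_nonneg _)
  nlinarith [hG.sum_sum_mul_abs_add_abs_sq_le hd f]

lemma IsWSG.exists_betaR_le_sqrt (hG : IsWSG w sgn) {dmax : ℝ} (hd : ∀ u, deg w u ≤ dmax)
    {f : Fin N → ℝ} (hf : f ⬝ᵥ f = 1) :
    ∃ V1 V2 : Finset (Fin N), Disjoint V1 V2 ∧ (V1 ∪ V2).Nonempty ∧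
      betaR w sgn (fun _ => 1) V1 V2 ≤ √(2 * dmax * (f ⬝ᵥ (lap w sgn *ᵥ f))) := by
  obtain ⟨V1, V2, hdisj, hne, hle⟩ := hG.exists_two_mul_betaR_le hf
  refine ⟨V1, V2, hdisj, hne, Real.le_sqrt_of_sq_le ?_⟩
  have hcs := hG.sq_sum_sum_mul_abs_sub_mul_le hd f
  rw [hf] at hcs
  nlinarith [pow_le_pow_left₀ (mul_nonneg zero_le_two (hG.betaR_one_nonneg hdisj)) hle 2]

theorem signed_cheeger_inequality_nonnormalized_general {N : ℕ} (hN : 0 < N)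
    (w sgn : Fin N → Fin N → ℝ) (hG : IsWSG w sgn) :
    evals (lap w sgn) ⟨0, hN⟩ / 2 ≤ h1 w sgn (fun _ => 1) ∧
    h1 w sgn (fun _ => 1) ≤
      Real.sqrt (2 * (⨆ u, deg w u) * evals (lap w sgn) ⟨0, hN⟩) := by
  have hbdd : BddBelow {x | ∃ V1 V2 : Finset (Fin N),
      Disjoint V1 V2 ∧ (V1 ∪ V2).Nonempty ∧ x = betaR w sgn (fun _ => 1) V1 V2} :=
    ⟨0, by rintro _ ⟨V1, V2, hdisj, -, rfl⟩; exact hG.betaR_one_nonneg hdisj⟩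
  constructor
  · refine le_csInf ⟨_, {⟨0, hN⟩}, ∅, Finset.disjoint_empty_right _, by simp, rfl⟩ ?_
    rintro _ ⟨V1, V2, hdisj, hne, rfl⟩
    linarith [hG.evals_lap_le_two_mul_betaR hN hdisj hne]
  · obtain ⟨f, hf, hfeig⟩ :=
      exists_dotProduct_self_eq_one_and_dotProduct_mulVec_eq_evals_zero hG.lap_isHermitian hN
    obtain ⟨V1, V2, hdisj, hne, hle⟩ :=
      hG.exists_betaR_le_sqrt (fun u => le_ciSup (Set.finite_range (deg w)).bddAbove u) hf
    rw [hfeig] at hle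
    exact (csInf_le hbdd ⟨V1, V2, hdisj, hne, rfl⟩).trans hle

/-- **non-normalized signed Cheeger inequality.**
`λ₁(L^σ)/2 ≤ h₁^σ(μ₁) ≤ √(2 d_max λ₁(L^σ))`, where `μ₁ ≡ 1`. -/
theorem signed_cheeger_inequality_nonnormalized {N : ℕ} (hN : 0 < N)
    (w sgn : Fin N → Fin N → ℝ) (hG : IsWSG w sgn) (hd : ∀ u, 0 < deg w u) :
    evals (lap w sgn) ⟨0, hN⟩ / 2 ≤ h1 w sgn (fun _ => 1) ∧
    h1 w sgn (fun _ => 1) ≤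
      Real.sqrt (2 * (⨆ u, deg w u) * evals (lap w sgn) ⟨0, hN⟩) :=
  signed_cheeger_inequality_nonnormalized_general hN w sgn hG

end SignedGraph
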